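/- (Myopic per-round guarantee.) Fix a round with candidate set R, types t_{jk} ∈ {0,1}, φ_k(R) = Σ_j t_{jk} > 0 for all k, weights c_k > 0 and budget a > 0. Let ᾱ = max{α ≥ 0 : α ≤ c_k φ_k(R) ∀k and Σ_k α/c_k ≤ a}, and set x̄_j = max_k (ᾱ/c_k)·(t_{jk}/φ_k(R)). Then 0 ≤ x̄_j ≤ 1, Σ_{j∈R} x̄_j ≤ a, and for every dimension k, c_k Σ_{j∈R} x̄_j t_{jk} ≥ ᾱ. -/
import Mathlib


/-- Maximum of a function over `Fin d` (with `0 < d`). -/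
noncomputable def finMax {d : ℕ} (hd : 0 < d) (f : Fin d → ℝ) : ℝ :=
  Finset.univ.sup' ⟨⟨0, hd⟩, Finset.mem_univ _⟩ f

/-- Myopic per-round guarantee: with `ᾱ` the largest uniform utility target and
`x̄_j = max_k (ᾱ/c_k)(t_{jk}/φ_k(R))`, the solution is feasible in `[0,1]`,
respects the budget `a`, and achieves utility at least `ᾱ` in every dimension. -/
theorem stmt12 (d m : ℕ) (hd : 0 < d) (a : ℝ) (ha : 0 < a)
    (c : Fin d → ℝ) (hc : ∀ k, 0 < c k)
    (t : Fin m → Fin d → ℝ) (ht : ∀ j k, t j k = 0 ∨ t j k = 1)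
    (φ : Fin d → ℝ) (hφdef : ∀ k, φ k = ∑ j, t j k) (hφpos : ∀ k, 0 < φ k)
    (αbar : ℝ)
    (hα : IsGreatest {α : ℝ | 0 ≤ α ∧ (∀ k, α ≤ c k * φ k) ∧ ∑ k, α / c k ≤ a} αbar)
    (xbar : Fin m → ℝ)
    (hx : ∀ j, xbar j = finMax hd (fun k => αbar / c k * (t j k / φ k))) :
    (∀ j, 0 ≤ xbar j ∧ xbar j ≤ 1) ∧ (∑ j, xbar j ≤ a) ∧
    (∀ k, αbar ≤ c k * ∑ j, xbar j * t j k) := by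
  obtain ⟨⟨hα0, hαk, hαsum⟩, -⟩ := hα
  have ht0 : ∀ j k, 0 ≤ t j k := by
    intro j k; rcases ht j k with h | h <;> simp [h]
  have hterm0 : ∀ j k, 0 ≤ αbar / c k * (t j k / φ k) := by
    intro j k
    exact mul_nonneg (div_nonneg hα0 (hc k).le) (div_nonneg (ht0 j k) (hφpos k).le)
  have hle : ∀ j k, αbar / c k * (t j k / φ k) ≤ xbar j := by
    intro j k
    rw [hx j]
    exact Finset.le_sup' (fun k => αbar / c k * (t j k / φ k)) (Finset.mem_univ k)
  have hx0 : ∀ j, 0 ≤ xbar j := fun j =>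
    le_trans (hterm0 j ⟨0, hd⟩) (hle j ⟨0, hd⟩)
  refine ⟨fun j => ⟨hx0 j, ?_⟩, ?_, ?_⟩
  · rw [hx j]
    apply Finset.sup'_le
    intro k _
    have h2 : αbar / c k * (t j k / φ k) ≤ αbar / c k * (1 / φ k) := by
      apply mul_le_mul_of_nonneg_left _ (div_nonneg hα0 (hc k).le)
      rcases ht j k with h | h
      · rw [h, zero_div]; exact div_nonneg zero_le_one (hφpos k).le
      · rw [h]
    calc αbar / c k * (t j k / φ k) ≤ αbar / c k * (1 / φ k) := h2
      _ = αbar / (c k * φ k) := by field_simp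
      _ ≤ 1 := by
          rw [div_le_one (mul_pos (hc k) (hφpos k))]
          exact hαk k
  · have key : ∀ j, xbar j ≤ ∑ k, αbar / c k * (t j k / φ k) := by
      intro j
      rw [hx j]
      apply Finset.sup'_le
      intro k _
      exact Finset.single_le_sum (fun i _ => hterm0 j i) (Finset.mem_univ k)
    calc ∑ j, xbar j ≤ ∑ j, ∑ k, αbar / c k * (t j k / φ k) :=
          Finset.sum_le_sum fun j _ => key j
      _ = ∑ k, αbar / c k := by
          rw [Finset.sum_comm]
          apply Finset.sum_congr rfl
          intro k _
          rw [← Finset.mul_sum, ← Finset.sum_div, ← hφdef k,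
            div_self (hφpos k).ne', mul_one]
      _ ≤ a := hαsum
  · intro k
    have hsq : ∀ j, t j k * t j k = t j k := by
      intro j; rcases ht j k with h | h <;> simp [h]
    have key : ∀ j, αbar / c k * (t j k / φ k) ≤ xbar j * t j k := by
      intro j
      rcases ht j k with h | h
      · simp [h]
      · simpa [h] using hle j k
    have : αbar / c k ≤ ∑ j, xbar j * t j k := by
      calc αbar / c k = ∑ j, αbar / c k * (t j k / φ k) := by
            rw [← Finset.mul_sum, ← Finset.sum_div, ← hφdef k,
              div_self (hφpos k).ne', mul_one]
          _ ≤ ∑ j, xbar j * t j k := Finset.sum_le_sum fun j _ => key j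
    calc αbar = c k * (αbar / c k) := by
          rw [mul_comm, div_mul_cancel₀ αbar (hc k).ne']
      _ ≤ c k * ∑ j, xbar j * t j k := by
          apply mul_le_mul_of_nonneg_left this (hc k).le
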